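/- Let H be a bounded self-adjoint operator on a complex Hilbert space, σ ∈ ℝ, and t > 0. For each positive integer N set Δt := t/N and V_N := exp(−i Δt H) · exp(−(σ² Δt²/2) H²). Then (V_N)^N converges in operator norm to exp(−i t H) as N → ∞. -/

import Mathlib

open NormedSpace Filter Topology

/- Since `H` commutes with `H * H`, the two factors of the regulated step combine into one
exponential, so that `V_N ^ N = exp (-(i t) • H + N⁻¹ • c • H²)` with `c = -σ² t² / 2`: the
Gaussian damping contributes a term of order `1 / N`, which vanishes in the limit by continuity
of `exp`. -/

theorem exp_mul_exp_pow_of_commute {A : Type*} [NormedRing A] [NormedAlgebra ℚ A]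
    [CompleteSpace A] {a b : A} (hab : Commute a b) (n : ℕ) :
    (exp a * exp b) ^ n = exp (n • (a + b)) := by
  rw [← exp_add_of_commute hab, exp_nsmul]

theorem tendsto_exp_inv_smul_mul_exp_inv_sq_smul_pow {𝕂 A : Type*} [RCLike 𝕂] [NormedRing A]
    [NormedAlgebra 𝕂 A] [CompleteSpace A] {a b : A} (hab : Commute a b) :
    Tendsto (fun N : ℕ => (exp ((N : 𝕂)⁻¹ • a) * exp (((N : 𝕂) ^ 2)⁻¹ • b)) ^ N)
      atTop (𝓝 (exp a)) := by
  let : NormedAlgebra ℚ A := NormedAlgebra.restrictScalars ℚ 𝕂 A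
  have hpow : ∀ᶠ N : ℕ in atTop, exp (a + (N : 𝕂)⁻¹ • b) =
      (exp ((N : 𝕂)⁻¹ • a) * exp (((N : 𝕂) ^ 2)⁻¹ • b)) ^ N := by
    filter_upwards [eventually_ne_atTop 0] with N hN
    have hN' : (N : 𝕂) ≠ 0 := Nat.cast_ne_zero.mpr hN
    rw [exp_mul_exp_pow_of_commute ((hab.smul_left _).smul_right _), ← Nat.cast_smul_eq_nsmul 𝕂,
      smul_add, smul_smul, smul_smul, mul_inv_cancel₀ hN', one_smul, sq, mul_inv,
      ← mul_assoc, mul_inv_cancel₀ hN', one_mul]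
  have hlim : Tendsto (fun N : ℕ => exp (a + (N : 𝕂)⁻¹ • b)) atTop (𝓝 (exp a)) := by
    have hsum := tendsto_const_nhds (x := a).add
      ((tendsto_inv_atTop_nhds_zero_nat (𝕜 := 𝕂)).smul_const b)
    rw [zero_smul, add_zero] at hsum
    exact (exp_continuous.tendsto a).comp hsum
  exact hlim.congr' hpow

theorem regulated_step_continuum_limit_general {𝓗 : Type*} [NormedAddCommGroup 𝓗]
    [InnerProductSpace ℂ 𝓗] [CompleteSpace 𝓗]
    (H : 𝓗 →L[ℂ] 𝓗) (σ t : ℝ) :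
    Filter.Tendsto
      (fun N : ℕ =>
        (exp ((-(Complex.I * ((t / (N : ℝ)) : ℂ))) • H) *
          exp (((-(σ ^ 2 * (t / (N : ℝ)) ^ 2 / 2) : ℝ) : ℂ) • (H * H))) ^ N)
      Filter.atTop (nhds (exp ((-(Complex.I * (t : ℂ))) • H))) := by
  have hcomm : Commute ((-(Complex.I * t)) • H) (((-(σ ^ 2 * t ^ 2 / 2) : ℝ) : ℂ) • (H * H)) :=
    (((Commute.refl H).mul_right (Commute.refl H)).smul_left _).smul_right _
  refine (tendsto_exp_inv_smul_mul_exp_inv_sq_smul_pow (𝕂 := ℂ) hcomm).congr fun N => ?_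
  simp only [smul_smul]
  congr 4 <;> push_cast <;> ring

/-- Fixed-`σ` continuum limit: with `Δt = t/N` and
`V_N = exp(−i Δt H) · exp(−(σ² Δt²/2) H²)`, the powers `(V_N)^N` converge in operator
norm to `exp(−i t H)` as `N → ∞`. -/
theorem regulated_step_continuum_limit {𝓗 : Type*} [NormedAddCommGroup 𝓗]
    [InnerProductSpace ℂ 𝓗] [CompleteSpace 𝓗]
    (H : 𝓗 →L[ℂ] 𝓗) (hH : IsSelfAdjoint H) (σ t : ℝ) (ht : 0 < t) :
    Filter.Tendsto
      (fun N : ℕ =>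
        (exp ((-(Complex.I * ((t / (N : ℝ)) : ℂ))) • H) *
          exp (((-(σ ^ 2 * (t / (N : ℝ)) ^ 2 / 2) : ℝ) : ℂ) • (H * H))) ^ N)
      Filter.atTop (nhds (exp ((-(Complex.I * (t : ℂ))) • H))) :=
  regulated_step_continuum_limit_general H σ t
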